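/- Under the localized frame setup, the Ω-assumptions, and the decay assumption on Θ, the compact set M of the approximation lemma can be chosen so that additionally #(Γ ∩ M) ≤ C′ μ(Ω), where C′ > 0 depends only on ε, p, α, the decay constant C, the frame bound B, the boundary covering number d, N(Γ), and C(Γ) — but not on μ(Ω). In particular the dimension d_M of V_M satisfies d_M ≤ C′ μ(Ω). -/

import Mathlib

open MeasureTheory Set
open scoped Classical Pointwise

/-!
For `x ∈ Ω` and `γ ∈ Γ` put `k = ⌈γ - x⌉ ∈ ℤⁿ` (`latticeOffset`). Then `|F_γ(x)| ≤ φ(k)`, where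
`φ(k)` is the supremum of `|Θ|` over the unit cube `[0,1]ⁿ - k` (`cubeSup`), and at most
`2ⁿ N(Γ)` points of `Γ` share an offset. Every coefficient is bounded by
`‖c‖_p ≤ B^{1/p} ‖f‖_p`, so dropping all `γ` outside `M = Ω + B(0, N/2 + 1)` (sup norm),
whose offsets satisfy `|k|_∞ > N/2`, changes `f(x)` by at most
`B^{1/p} ‖f‖_p 2ⁿ N(Γ) C / N^{nα}`. Taking `N^{nα} = K μ(Ω)` with `K` depending only on the
data makes this `≤ ε ‖f‖_p / μ(Ω)`, and since `α ≥ 1` also `Nⁿ ≤ K μ(Ω)`.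

A point of `Γ ∩ M` outside `Ω` lies within `N/2 + 1` of `∂Ω`, hence in one of the `d` covering
cubes enlarged by `N/2 + 1`, and each of those contains `O(Nⁿ N(Γ)) = O(μ(Ω))` points of `Γ`;
together with `#(Γ ∩ Ω) ≤ C(Γ) μ(Ω)` this bounds `#(Γ ∩ M)`, and `dim V_M ≤ #(Γ ∩ M)`.
-/

theorem summable_comp_and_tsum_comp_le_of_card_filter_le {ι κ : Type*} [DecidableEq κ]
    (f : ι → κ) (Q : ℕ) (hf : ∀ (u : Finset ι) (k : κ), (u.filter fun i => f i = k).card ≤ Q)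
    {φ : κ → ℝ} (hφ0 : 0 ≤ φ) (hφ : Summable φ) :
    Summable (φ ∘ f) ∧ ∑' i, φ (f i) ≤ Q * ∑' k, φ k := by
  have hsum : ∀ u : Finset ι, ∑ i ∈ u, φ (f i) ≤ Q * ∑' k, φ k := fun u =>
    calc ∑ i ∈ u, φ (f i) = ∑ k ∈ u.image f, (u.filter fun i => f i = k).card • φ k :=
          Finset.sum_comp φ f
      _ ≤ ∑ k ∈ u.image f, Q * φ k := Finset.sum_le_sum fun k _ => by
          rw [nsmul_eq_mul]; gcongr; exacts [hφ0 k, hf u k]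
      _ ≤ Q * ∑' k, φ k := by
          rw [← Finset.mul_sum]; gcongr; exact hφ.sum_le_tsum _ fun k _ => hφ0 k
  exact ⟨summable_of_sum_le (fun i => hφ0 (f i)) hsum,
    Real.tsum_le_of_sum_le (fun i => hφ0 (f i)) hsum⟩

theorem summable_and_abs_tsum_le_of_card_filter_le {ι κ : Type*} [DecidableEq κ]
    (f : ι → κ) (Q : ℕ) (hf : ∀ (u : Finset ι) (k : κ), (u.filter fun i => f i = k).card ≤ Q)
    {φ : κ → ℝ} (hφ0 : 0 ≤ φ) (hφ : Summable φ) {g : ι → ℝ} (hg : ∀ i, |g i| ≤ φ (f i)) :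
    Summable g ∧ |∑' i, g i| ≤ Q * ∑' k, φ k := by
  obtain ⟨hφf, hle⟩ := summable_comp_and_tsum_comp_le_of_card_filter_le f Q hf hφ0 hφ
  exact ⟨hφf.of_norm_bounded hg, (tsum_of_norm_bounded (f := g) hφf.hasSum hg).trans hle⟩

theorem abs_le_tsum_rpow_rpow_inv {ι : Type*} {c : ι → ℝ} {p : ℝ} (hp : 0 < p)
    (hc : Summable fun i => |c i| ^ p) (i : ι) : |c i| ≤ (∑' j, |c j| ^ p) ^ (1 / p) :=
  calc |c i| = (|c i| ^ p) ^ p⁻¹ := (Real.rpow_rpow_inv (abs_nonneg _) hp.ne').symm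
    _ ≤ (∑' j, |c j| ^ p) ^ (1 / p) := by
      rw [one_div]
      gcongr
      exact hc.le_tsum i fun j _ => by positivity

theorem rpow_inv_pow_le {L a : ℝ} (hL : 1 ≤ L) (ha : 1 ≤ a) (n : ℕ) :
    (L ^ ((n : ℝ) * a)⁻¹) ^ n ≤ L := by
  rw [← Real.rpow_natCast, ← Real.rpow_mul (by linarith)]
  refine Real.rpow_le_self_of_one_le hL ?_
  rcases eq_or_ne (n : ℝ) 0 with hn | hn
  · simp [hn]
  rw [mul_inv, mul_right_comm, inv_mul_cancel₀ hn, one_mul]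
  exact inv_le_one_of_one_le₀ ha

theorem one_le_of_div_sub_one_le {p α : ℝ} (hp : 1 ≤ p) (h₁ : 1 < p → p / (p - 1) ≤ α)
    (h₂ : p = 1 → 1 ≤ α) : 1 ≤ α := by
  rcases hp.eq_or_lt with h | h
  · exact h₂ h.symm
  · exact ((one_le_div (by linarith)).2 (by linarith)).trans (h₁ h)

theorem div_max_one_div_le (a : ℝ) {ε : ℝ} (hε : 0 < ε) : a / max 1 (a / ε) ≤ ε := by
  rw [div_le_iff₀ (lt_max_of_lt_left one_pos), mul_comm, ← div_le_iff₀ hε]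
  exact le_max_right _ _

theorem exists_mem_frontier_dist_le_of_mem_add_closedBall {E : Type*} [NormedAddCommGroup E]
    [NormedSpace ℝ E] [FiniteDimensional ℝ E] {s : Set E} {R : ℝ} {y : E}
    (hy : y ∈ s + Metric.closedBall (0 : E) R) (hys : y ∉ s) : ∃ z ∈ frontier s, dist y z ≤ R := by
  obtain ⟨a, ha, b, hb, rfl⟩ := hy
  have hne : sᶜ ≠ univ := fun h => (h ▸ mem_univ a : a ∈ sᶜ) ha
  obtain ⟨z, hz, hdist⟩ := exists_mem_frontier_infDist_compl_eq_dist hys hne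
  rw [frontier_compl, compl_compl] at *
  refine ⟨z, hz, hdist ▸ (Metric.infDist_le_dist_of_mem ha).trans ?_⟩
  simpa [dist_eq_norm] using hb

theorem finrank_span_setOf_le_ncard {X V : Type*} [AddCommGroup V] [Module ℝ V]
    {Γ : Set X} (F : Γ → V) {M : Set X} (hM : (Γ ∩ M).Finite) :
    Module.finrank ℝ (Submodule.span ℝ {g : V | ∃ γ : Γ, (γ : X) ∈ M ∧ g = F γ}) ≤
      (Γ ∩ M).ncard := by
  set P : Set Γ := {γ | (γ : X) ∈ M}
  have hval : Subtype.val '' P = Γ ∩ M := Subtype.image_preimage_coe Γ M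
  have hP : P.Finite := (hval ▸ hM : (Subtype.val '' P).Finite).of_finite_image
    Subtype.val_injective.injOn
  have hset : {g : V | ∃ γ : Γ, (γ : X) ∈ M ∧ g = F γ} = F '' P := by
    ext g; simp [P, eq_comm]
  have := (hP.image F).fintype
  rw [hset]
  calc Module.finrank ℝ (Submodule.span ℝ (F '' P))
      ≤ (F '' P).toFinset.card := finrank_span_le_card _
    _ = (F '' P).ncard := (ncard_eq_toFinset_card' _).symm
    _ ≤ P.ncard := ncard_image_le hP
    _ = (Γ ∩ M).ncard := by rw [← hval, ncard_image_of_injective _ Subtype.val_injective]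

section LatticeCount

variable {n : ℕ}

def unitCube (k : Fin n → ℤ) : Set (Fin n → ℝ) :=
  Icc (fun i => (k i : ℝ)) (fun i => (k i : ℝ) + 1)

def CubeCountLE (Γ : Set (Fin n → ℝ)) (N : ℕ) : Prop :=
  ∀ k, (Γ ∩ unitCube k).Finite ∧ (Γ ∩ unitCube k).ncard ≤ N

variable {Γ : Set (Fin n → ℝ)} {N : ℕ}

theorem CubeCountLE.finite_and_ncard_le_of_floor_mem (hΓ : CubeCountLE Γ N)
    {S : Set (Fin n → ℝ)} (t : Finset (Fin n → ℤ)) (hS : ∀ y ∈ S, (fun i => ⌊y i⌋) ∈ t) :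
    (Γ ∩ S).Finite ∧ (Γ ∩ S).ncard ≤ t.card * N := by
  have hsub : Γ ∩ S ⊆ ⋃ k ∈ t, Γ ∩ unitCube k := fun y hy =>
    mem_biUnion (hS y hy.2)
      ⟨hy.1, fun i => Int.floor_le (y i), fun i => (Int.lt_floor_add_one (y i)).le⟩
  have hU := t.finite_toSet.biUnion fun k _ => (hΓ k).1
  refine ⟨hU.subset hsub, ?_⟩
  calc (Γ ∩ S).ncard ≤ _ := ncard_le_ncard hsub hU
    _ ≤ _ := t.set_ncard_biUnion_le _
    _ ≤ t.card * N := Finset.sum_le_card_nsmul _ _ _ fun k _ => (hΓ k).2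

theorem CubeCountLE.finite_and_ncard_le_of_forall_mem_Icc (hΓ : CubeCountLE Γ N)
    {S : Set (Fin n → ℝ)} (a : Fin n → ℝ) (L : ℝ)
    (hS : ∀ y ∈ S, ∀ i, y i ∈ Icc (a i) (a i + L)) :
    (Γ ∩ S).Finite ∧ (Γ ∩ S).ncard ≤ (⌈L⌉₊ + 1) ^ n * N := by
  have hfloor : ∀ y ∈ S, (fun i => ⌊y i⌋) ∈
      Fintype.piFinset fun i => Finset.Icc ⌊a i⌋ (⌊a i⌋ + ⌈L⌉₊) := by
    intro y hy
    refine Fintype.mem_piFinset.2 fun i => Finset.mem_Icc.2 ⟨Int.floor_mono (hS y hy i).1, ?_⟩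
    rw [← Int.floor_add_natCast]
    exact Int.floor_mono ((hS y hy i).2.trans (by gcongr; exact Nat.le_ceil L))
  have hcard : (Fintype.piFinset fun i => Finset.Icc ⌊a i⌋ (⌊a i⌋ + ⌈L⌉₊)).card =
      (⌈L⌉₊ + 1) ^ n := by
    simp [Fintype.card_piFinset, Int.card_Icc, add_assoc]
  simpa [hcard] using hΓ.finite_and_ncard_le_of_floor_mem _ hfloor

theorem CubeCountLE.finite_and_ncard_inter_add_closedBall_le (hΓ : CubeCountLE Γ N)
    {Ω : Set (Fin n → ℝ)} (hΩ : (Γ ∩ Ω).Finite)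
    (s : Finset (Fin n → ℤ)) (hs : frontier Ω ⊆ ⋃ k ∈ s, unitCube k) (R : ℝ) :
    (Γ ∩ (Ω + Metric.closedBall (0 : Fin n → ℝ) R)).Finite ∧
      (Γ ∩ (Ω + Metric.closedBall (0 : Fin n → ℝ) R)).ncard ≤
        (Γ ∩ Ω).ncard + s.card * ((⌈2 * R + 1⌉₊ + 1) ^ n * N) := by
  set box : (Fin n → ℤ) → Set (Fin n → ℝ) := fun k =>
    {y | ∀ i, y i ∈ Icc (k i - R) (k i - R + (2 * R + 1))}
  have hbox := fun k => hΓ.finite_and_ncard_le_of_forall_mem_Icc (S := box k) _ _ fun y hy => hy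
  have hsub : Γ ∩ (Ω + Metric.closedBall (0 : Fin n → ℝ) R) ⊆ (Γ ∩ Ω) ∪ ⋃ k ∈ s, Γ ∩ box k := by
    rintro y ⟨hyΓ, hy⟩
    by_cases hyΩ : y ∈ Ω
    · exact Or.inl ⟨hyΓ, hyΩ⟩
    obtain ⟨z, hz, hyz⟩ := exists_mem_frontier_dist_le_of_mem_add_closedBall hy hyΩ
    obtain ⟨k, hk, hzk⟩ := mem_iUnion₂.1 (hs hz)
    refine Or.inr (mem_biUnion hk ⟨hyΓ, fun i => ?_⟩)
    have hi := abs_le.1 (((Real.dist_eq _ _).symm.trans_le (dist_le_pi_dist y z i)).trans hyz)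
    constructor <;> linarith [hzk.1 i, hzk.2 i]
  have hU := hΩ.union (s.finite_toSet.biUnion fun k _ => (hbox k).1)
  refine ⟨hU.subset hsub, (ncard_le_ncard hsub hU).trans ((ncard_union_le _ _).trans ?_)⟩
  gcongr
  exact (s.set_ncard_biUnion_le _).trans (Finset.sum_le_card_nsmul _ _ _ fun k _ => (hbox k).2)

theorem CubeCountLE.finite_and_ncard_inter_add_closedBall_le_of_pow_le
    (hΓ : CubeCountLE Γ N) {Ω : Set (Fin n → ℝ)} (hΩ : (Γ ∩ Ω).Finite)
    (s : Finset (Fin n → ℤ)) (hs : frontier Ω ⊆ ⋃ k ∈ s, unitCube k) {r L : ℝ} (hr : 1 ≤ r)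
    (hrL : r ^ n ≤ L) :
    (Γ ∩ (Ω + Metric.closedBall (0 : Fin n → ℝ) (r / 2 + 1))).Finite ∧
      ((Γ ∩ (Ω + Metric.closedBall (0 : Fin n → ℝ) (r / 2 + 1))).ncard : ℝ) ≤
        (Γ ∩ Ω).ncard + s.card * (6 ^ n * L * N) := by
  obtain ⟨hfin, hcard⟩ := hΓ.finite_and_ncard_inter_add_closedBall_le hΩ s hs (r / 2 + 1)
  have hceil : (⌈2 * (r / 2 + 1) + 1⌉₊ : ℝ) + 1 ≤ 6 * r := by
    linarith [Nat.ceil_lt_add_one (by positivity : (0 : ℝ) ≤ 2 * (r / 2 + 1) + 1)]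
  refine ⟨hfin, (Nat.cast_le.2 hcard).trans ?_⟩
  push_cast
  gcongr
  calc ((⌈2 * (r / 2 + 1) + 1⌉₊ : ℝ) + 1) ^ n ≤ (6 * r) ^ n := by gcongr
    _ ≤ 6 ^ n * L := by rw [mul_pow]; gcongr

end LatticeCount

section Envelope

variable {n : ℕ}

noncomputable def latticeOffset (x y : Fin n → ℝ) : Fin n → ℤ := fun i => ⌈y i - x i⌉

noncomputable def cubeSup (Θ : (Fin n → ℝ) → ℝ) (k : Fin n → ℤ) : ℝ :=
  sSup ((fun x => |Θ (x - fun i => (k i : ℝ))|) '' Icc (0 : Fin n → ℝ) 1)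

theorem cubeSup_nonneg (Θ : (Fin n → ℝ) → ℝ) (k : Fin n → ℤ) : 0 ≤ cubeSup Θ k :=
  Real.sSup_nonneg <| by rintro _ ⟨x, -, rfl⟩; exact abs_nonneg _

theorem abs_le_cubeSup_latticeOffset {Θ : (Fin n → ℝ) → ℝ} {T : ℝ} (hΘ : ∀ x, |Θ x| ≤ T)
    (x y : Fin n → ℝ) : |Θ (x - y)| ≤ cubeSup Θ (latticeOffset x y) := by
  set u : Fin n → ℝ := fun i => (latticeOffset x y i : ℝ) - (y i - x i)
  have hu : u ∈ Icc (0 : Fin n → ℝ) 1 :=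
    ⟨fun i => sub_nonneg.2 (Int.le_ceil _),
      fun i => by
        simp only [u, latticeOffset, Pi.one_apply]
        linarith [Int.ceil_lt_add_one (y i - x i)]⟩
  have hux : (u - fun i => (latticeOffset x y i : ℝ)) = x - y := by
    ext i
    simp only [u, Pi.sub_apply]
    ring
  exact le_csSup ⟨T, by rintro _ ⟨z, -, rfl⟩; exact hΘ _⟩ ⟨u, hu, congrArg (fun z => |Θ z|) hux⟩

theorem summable_cubeSup {Θ : (Fin n → ℝ) → ℝ}
    (hΘ : Summable fun k : Fin n → ℤ =>
      sSup ((fun x => |Θ (x + fun i => (k i : ℝ))|) '' Icc (0 : Fin n → ℝ) 1)) :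
    Summable (cubeSup Θ) := by
  refine ((Equiv.neg (Fin n → ℤ)).summable_iff.2 hΘ).congr fun k => ?_
  simp only [cubeSup, Function.comp_apply, Equiv.neg_apply, Pi.neg_apply, Int.cast_neg,
    sub_eq_add_neg]
  rfl

theorem tsum_cubeSup_tail_le {Θ : (Fin n → ℝ) → ℝ} {C α : ℝ} (hα : 0 < α)
    (hdecay : ∀ N : ℝ, 1 ≤ N →
      ∑' k : {k : Fin n → ℤ // ¬ ∀ i, |(k i : ℝ)| ≤ N / 2}, cubeSup Θ k
        < C / N ^ ((n : ℝ) * α))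
    {L : ℝ} (hL : 1 ≤ L) :
    ∑' k : {k : Fin n → ℤ // ¬ ∀ i, |(k i : ℝ)| ≤ L ^ ((n : ℝ) * α)⁻¹ / 2}, cubeSup Θ k
      ≤ C / L := by
  rcases Nat.eq_zero_or_pos n with rfl | hn
  -- for `n = 0` the tail is an empty sum, and `hdecay 1` reads `0 < C`
  · have hempty (r : ℝ) : IsEmpty {k : Fin 0 → ℤ // ¬ ∀ i, |(k i : ℝ)| ≤ r} :=
      ⟨fun k => k.2 finZeroElim⟩
    have hC := hdecay 1 le_rfl
    simp only [tsum_empty, Real.one_rpow, div_one] at hC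
    rw [tsum_empty]
    positivity
  · have hN : 1 ≤ L ^ ((n : ℝ) * α)⁻¹ := Real.one_le_rpow hL (by positivity)
    have hnα : (n : ℝ) * α ≠ 0 := (mul_pos (Nat.cast_pos.2 hn) hα).ne'
    have := (hdecay _ hN).le
    rwa [Real.rpow_inv_rpow (by linarith) hnα] at this

theorem mem_add_closedBall_of_abs_latticeOffset_le {Ω : Set (Fin n → ℝ)} {x y : Fin n → ℝ}
    (hx : x ∈ Ω) {r : ℝ} (hr : 0 ≤ r) (h : ∀ i, |(latticeOffset x y i : ℝ)| ≤ r) :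
    y ∈ Ω + Metric.closedBall (0 : Fin n → ℝ) (r + 1) := by
  refine ⟨x, hx, y - x, ?_, add_sub_cancel x y⟩
  rw [mem_closedBall_zero_iff, pi_norm_le_iff_of_nonneg (by linarith)]
  intro i
  have hceil := Int.ceil_lt_add_one (y i - x i)
  have hi := abs_le.1 (h i)
  simp only [latticeOffset] at hi
  rw [Real.norm_eq_abs, Pi.sub_apply, abs_le]
  constructor <;> linarith [Int.le_ceil (y i - x i)]

theorem mem_Icc_of_latticeOffset_eq {x y : Fin n → ℝ} {k : Fin n → ℤ}
    (h : latticeOffset x y = k) (i : Fin n) :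
    y i ∈ Icc (x i + k i - 1) (x i + k i - 1 + 1) := by
  subst h
  constructor <;> simp only [latticeOffset] <;>
    linarith [Int.le_ceil (y i - x i), Int.ceil_lt_add_one (y i - x i)]

variable {Γ : Set (Fin n → ℝ)} {N : ℕ}

theorem CubeCountLE.card_filter_latticeOffset_le (hΓ : CubeCountLE Γ N) (x : Fin n → ℝ)
    (u : Finset Γ) (k : Fin n → ℤ) :
    (u.filter fun γ : Γ => latticeOffset x γ = k).card ≤ 2 ^ n * N := by
  have hS := hΓ.finite_and_ncard_le_of_forall_mem_Icc (S := {y | latticeOffset x y = k})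
    (fun i => x i + k i - 1) 1 fun y hy => mem_Icc_of_latticeOffset_eq hy
  rw [Nat.ceil_one] at hS
  calc (u.filter fun γ : Γ => latticeOffset x γ = k).card
      = (Subtype.val '' ((u.filter fun γ : Γ => latticeOffset x γ = k :) : Set Γ)).ncard := by
        rw [ncard_image_of_injective _ Subtype.val_injective, ncard_coe_finset]
    _ ≤ (Γ ∩ {y | latticeOffset x y = k}).ncard := by
        refine ncard_le_ncard ?_ hS.1
        rintro _ ⟨γ, hγ, rfl⟩
        exact ⟨γ.2, (Finset.mem_filter.1 hγ).2⟩
    _ ≤ 2 ^ n * N := hS.2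

variable {Θ : (Fin n → ℝ) → ℝ} {T : ℝ} {F : Γ → (Fin n → ℝ) → ℝ}

theorem abs_tsum_sub_tsum_ite_le (hΓ : CubeCountLE Γ N) (hΘ : ∀ x, |Θ x| ≤ T)
    (hΘsum : Summable (cubeSup Θ)) (hF : ∀ γ x, |F γ x| ≤ Θ (x - (γ : Fin n → ℝ)))
    {c : Γ → ℝ} {b : ℝ} (hb : 0 ≤ b) (hc : ∀ γ, |c γ| ≤ b) (x : Fin n → ℝ)
    (M : Set (Fin n → ℝ)) (bad : Set (Fin n → ℤ))
    (hbad : ∀ γ : Γ, (γ : Fin n → ℝ) ∉ M → latticeOffset x γ ∈ bad) :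
    |(∑' γ : Γ, c γ * F γ x) - ∑' γ : Γ, (if (γ : Fin n → ℝ) ∈ M then c γ * F γ x else 0)| ≤
      b * (2 ^ n * N * ∑' k : bad, cubeSup Θ k) := by
  have hQ := hΓ.card_filter_latticeOffset_le x
  have hdom : ∀ γ : Γ, |c γ * F γ x| ≤ b * cubeSup Θ (latticeOffset x γ) := fun γ => by
    rw [abs_mul]
    exact mul_le_mul (hc γ) ((hF γ x).trans ((le_abs_self _).trans
      (abs_le_cubeSup_latticeOffset hΘ x γ))) (abs_nonneg _) hb
  have hsum := (summable_and_abs_tsum_le_of_card_filter_le _ _ hQ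
    (fun k => mul_nonneg hb (cubeSup_nonneg Θ k)) (hΘsum.mul_left b) hdom).1
  have htail := summable_and_abs_tsum_le_of_card_filter_le _ _ hQ
    (φ := fun k => b * bad.indicator (cubeSup Θ) k)
    (fun k => mul_nonneg hb (indicator_nonneg (fun k _ => cubeSup_nonneg Θ k) k))
    ((hΘsum.indicator bad).mul_left b)
    (g := fun γ => if (γ : Fin n → ℝ) ∈ M then 0 else c γ * F γ x) fun γ => by
      by_cases hγ : (γ : Fin n → ℝ) ∈ M
      · simp only [hγ, if_true, abs_zero]
        exact mul_nonneg hb (indicator_nonneg (fun k _ => cubeSup_nonneg Θ k) _)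
      · simpa only [hγ, if_false, indicator_of_mem (hbad γ hγ)] using hdom γ
  have hsplit : (fun γ : Γ => if (γ : Fin n → ℝ) ∈ M then c γ * F γ x else 0) =
      fun γ => c γ * F γ x - if (γ : Fin n → ℝ) ∈ M then 0 else c γ * F γ x := by
    ext γ
    split_ifs <;> ring
  rw [hsplit, hsum.tsum_sub htail.1, sub_sub_cancel]
  refine htail.2.trans_eq ?_
  rw [tsum_mul_left, ← tsum_subtype]
  push_cast
  ring

theorem abs_tsum_sub_tsum_ite_add_closedBall_le (hΓ : CubeCountLE Γ N) (hΘ : ∀ x, |Θ x| ≤ T)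
    (hΘsum : Summable (cubeSup Θ)) (hF : ∀ γ x, |F γ x| ≤ Θ (x - (γ : Fin n → ℝ)))
    {C α : ℝ} (hα : 0 < α)
    (hdecay : ∀ N : ℝ, 1 ≤ N →
      ∑' k : {k : Fin n → ℤ // ¬ ∀ i, |(k i : ℝ)| ≤ N / 2}, cubeSup Θ k
        < C / N ^ ((n : ℝ) * α))
    {p B : ℝ} (hp : 0 < p) (hB : 0 < B) {c : Γ → ℝ} (hc : Summable fun γ => |c γ| ^ p)
    (hframe : ∑' γ, |c γ| ^ p ≤ B * ∫ y, |∑' γ, c γ * F γ y| ^ p)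
    {Ω : Set (Fin n → ℝ)} {x : Fin n → ℝ} (hx : x ∈ Ω) {L : ℝ} (hL : 1 ≤ L) :
    |(∑' γ : Γ, c γ * F γ x) - ∑' γ : Γ,
        (if (γ : Fin n → ℝ) ∈ Ω + Metric.closedBall 0 (L ^ ((n : ℝ) * α)⁻¹ / 2 + 1)
          then c γ * F γ x else 0)| ≤
      B ^ (1 / p) * (∫ y, |∑' γ, c γ * F γ y| ^ p) ^ (1 / p) * (2 ^ n * N * (C / L)) := by
  set r := L ^ ((n : ℝ) * α)⁻¹
  have hr : 0 ≤ r / 2 := by positivity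
  have hcoef : (∑' γ, |c γ| ^ p) ^ (1 / p) ≤
      B ^ (1 / p) * (∫ y, |∑' γ, c γ * F γ y| ^ p) ^ (1 / p) := by
    rw [← Real.mul_rpow hB.le (integral_nonneg fun y => by positivity)]
    gcongr
  calc _ ≤ (∑' γ, |c γ| ^ p) ^ (1 / p) *
          (2 ^ n * N * ∑' k : {k : Fin n → ℤ | ¬ ∀ i, |(k i : ℝ)| ≤ r / 2}, cubeSup Θ k) :=
        abs_tsum_sub_tsum_ite_le hΓ hΘ hΘsum hF (by positivity)
          (abs_le_tsum_rpow_rpow_inv hp hc) x _ _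
          fun γ hγ hall => hγ (mem_add_closedBall_of_abs_latticeOffset_le hx hr hall)
    _ ≤ _ := by
        refine mul_le_mul hcoef ?_ ?_ (by positivity)
        · gcongr
          exact tsum_cubeSup_tail_le hα hdecay hL
        · exact mul_nonneg (by positivity) (tsum_nonneg fun k => cubeSup_nonneg Θ _)

end Envelope

theorem statement5_general
    (n : ℕ) (p : ℝ) (hp : 1 ≤ p)
    (Γ : Set (Fin n → ℝ))
    (NΓ : ℕ)
    (hNΓfin : ∀ k : Fin n → ℤ,
      (Γ ∩ Set.Icc (fun i => (k i : ℝ)) (fun i => (k i : ℝ) + 1)).Finite)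
    (hNΓ : ∀ k : Fin n → ℤ,
      (Γ ∩ Set.Icc (fun i => (k i : ℝ)) (fun i => (k i : ℝ) + 1)).ncard ≤ NΓ)
    -- `Θ ∈ W(L¹)`
    (Θ : (Fin n → ℝ) → ℝ) (T : ℝ) (hΘbdd : ∀ x, |Θ x| ≤ T)
    (hΘsum : Summable (fun k : Fin n → ℤ =>
      sSup ((fun x => |Θ (x + fun i => (k i : ℝ))|) '' Set.Icc (0 : Fin n → ℝ) 1)))
    -- decay assumption on Θ
    (C α : ℝ)
    (hα1 : 1 < p → p / (p - 1) ≤ α) (hα2 : p = 1 → 1 ≤ α)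
    (hdecay : ∀ N : ℝ, 1 ≤ N →
      ∑' k : {k : Fin n → ℤ // ¬ ∀ i, |(k i : ℝ)| ≤ N / 2},
          sSup ((fun x => |Θ (x - fun i => ((k : Fin n → ℤ) i : ℝ))|) ''
            Set.Icc (0 : Fin n → ℝ) 1)
        < C / N ^ ((n : ℝ) * α))
    -- the localized frame
    (F : Γ → (Fin n → ℝ) → ℝ)
    (hFloc : ∀ γ x, |F γ x| ≤ Θ (x - (γ : Fin n → ℝ)))
    (A B : ℝ) (hB : 0 < B)
    (hframe : ∀ c : Γ → ℝ, Summable (fun γ => |c γ| ^ p) →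
      A * ∫ y, |∑' γ : Γ, c γ * F γ y| ^ p ≤ ∑' γ : Γ, |c γ| ^ p ∧
      ∑' γ : Γ, |c γ| ^ p ≤ B * ∫ y, |∑' γ : Γ, c γ * F γ y| ^ p)
    -- data on which C′ may depend
    (ε : ℝ) (hε : 0 < ε) (d : ℕ) (CΓ : ℝ) (hCΓ : 0 < CΓ) :
    -- C′ does not depend on Ω (in particular not on μ(Ω))
    ∃ C' : ℝ, 0 < C' ∧
      ∀ Ω : Set (Fin n → ℝ), IsCompact Ω → 1 ≤ (volume Ω).toReal →
        (∃ s : Finset (Fin n → ℤ), s.card = d ∧ frontier Ω ⊆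
          ⋃ k ∈ s, Set.Icc (fun i => (k i : ℝ)) (fun i => (k i : ℝ) + 1)) →
        (Γ ∩ Ω).Finite → ((Γ ∩ Ω).ncard : ℝ) ≤ CΓ * (volume Ω).toReal →
        ∃ M : Set (Fin n → ℝ), IsCompact M ∧
          -- the approximation property of the lemma
          (∀ c : Γ → ℝ, Summable (fun γ => |c γ| ^ p) →
            ∀ x ∈ Ω,
              |(∑' γ : Γ, c γ * F γ x) -
                  ∑' γ : Γ, (if (γ : Fin n → ℝ) ∈ M then c γ * F γ x else 0)| ≤
                (ε / (volume Ω).toReal) * (∫ y, |∑' γ : Γ, c γ * F γ y| ^ p) ^ (1 / p)) ∧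
          -- the cardinality bound
          (Γ ∩ M).Finite ∧
          (((Γ ∩ M).ncard : ℝ) ≤ C' * (volume Ω).toReal) ∧
          -- in particular: the dimension of V_M is at most C′ μ(Ω)
          ((Module.finrank ℝ
              (Submodule.span ℝ
                {g : (Fin n → ℝ) → ℝ | ∃ γ : Γ, (γ : Fin n → ℝ) ∈ M ∧ g = F γ}) : ℝ) ≤
            C' * (volume Ω).toReal) := by
  have hα : 1 ≤ α := one_le_of_div_sub_one_le hp hα1 hα2
  set K : ℝ := max 1 (2 ^ n * NΓ * C * B ^ (1 / p) / ε)
  refine ⟨CΓ + d * NΓ * 6 ^ n * K, by positivity, ?_⟩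
  rintro Ω hΩ hμ ⟨s, rfl, hs⟩ hΓΩ hΓΩcard
  set μ := (volume Ω).toReal
  have hKμ : 1 ≤ K * μ := one_le_mul_of_one_le_of_one_le (le_max_left _ _) hμ
  have hΓ : CubeCountLE Γ NΓ := fun k => ⟨hNΓfin k, hNΓ k⟩
  obtain ⟨hfin, hcard⟩ := hΓ.finite_and_ncard_inter_add_closedBall_le_of_pow_le hΓΩ s hs
    (Real.one_le_rpow hKμ (by positivity)) (rpow_inv_pow_le hKμ hα n)
  have hcard' : ((Γ ∩ (Ω + Metric.closedBall 0 ((K * μ) ^ ((n : ℝ) * α)⁻¹ / 2 + 1))).ncard : ℝ)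
      ≤ (CΓ + s.card * NΓ * 6 ^ n * K) * μ := by linarith
  refine ⟨_, hΩ.add (isCompact_closedBall _ _), fun c hc x hx => ?_, hfin, hcard',
    (Nat.cast_le.2 (finrank_span_setOf_le_ncard F hfin)).trans hcard'⟩
  set I := (∫ y, |∑' γ : Γ, c γ * F γ y| ^ p) ^ (1 / p)
  calc _ ≤ B ^ (1 / p) * I * (2 ^ n * NΓ * (C / (K * μ))) :=
        abs_tsum_sub_tsum_ite_add_closedBall_le hΓ hΘbdd (summable_cubeSup hΘsum) hFloc
          (by linarith) hdecay (by linarith) hB hc (hframe c hc).2 hx hKμ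
    _ = I / μ * (2 ^ n * NΓ * C * B ^ (1 / p) / K) := by field_simp
    _ ≤ I / μ * ε := by gcongr; exact div_max_one_div_le _ hε
    _ = ε / μ * I := by ring

/-- The compact set `M` of the approximation lemma can be chosen so that moreover
`#(Γ ∩ M) ≤ C′ μ(Ω)` with `C′` independent of `μ(Ω)` (it depends only on `ε, p, α, C, B, d,
N(Γ), C(Γ)` and the setup); in particular `d_M = dim V_M ≤ C′ μ(Ω)`. -/
theorem statement5
    (n : ℕ) (p : ℝ) (hp : 1 ≤ p)
    (Γ : Set (Fin n → ℝ)) (hΓc : Γ.Countable)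
    (β : ℝ) (hβ : 0 < β)
    (hsep : ∀ γ ∈ Γ, ∀ γ' ∈ Γ, γ ≠ γ' → β ≤ ‖γ - γ'‖)
    (NΓ : ℕ)
    (hNΓfin : ∀ k : Fin n → ℤ,
      (Γ ∩ Set.Icc (fun i => (k i : ℝ)) (fun i => (k i : ℝ) + 1)).Finite)
    (hNΓ : ∀ k : Fin n → ℤ,
      (Γ ∩ Set.Icc (fun i => (k i : ℝ)) (fun i => (k i : ℝ) + 1)).ncard ≤ NΓ)
    -- `Θ ∈ W(L¹)`
    (Θ : (Fin n → ℝ) → ℝ) (T : ℝ) (hΘbdd : ∀ x, |Θ x| ≤ T)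
    (hΘsum : Summable (fun k : Fin n → ℤ =>
      sSup ((fun x => |Θ (x + fun i => (k i : ℝ))|) '' Set.Icc (0 : Fin n → ℝ) 1)))
    -- decay assumption on Θ
    (C α : ℝ) (hC : 0 < C)
    (hα1 : 1 < p → p / (p - 1) ≤ α) (hα2 : p = 1 → 1 ≤ α)
    (hdecay : ∀ N : ℝ, 1 ≤ N →
      ∑' k : {k : Fin n → ℤ // ¬ ∀ i, |(k i : ℝ)| ≤ N / 2},
          sSup ((fun x => |Θ (x - fun i => ((k : Fin n → ℤ) i : ℝ))|) ''
            Set.Icc (0 : Fin n → ℝ) 1)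
        < C / N ^ ((n : ℝ) * α))
    -- the localized frame
    (F : Γ → (Fin n → ℝ) → ℝ)
    (hFcont : ∀ γ, Continuous (F γ))
    (hFloc : ∀ γ x, |F γ x| ≤ Θ (x - (γ : Fin n → ℝ)))
    (A B : ℝ) (hA : 0 < A) (hB : 0 < B)
    (hframe : ∀ c : Γ → ℝ, Summable (fun γ => |c γ| ^ p) →
      A * ∫ y, |∑' γ : Γ, c γ * F γ y| ^ p ≤ ∑' γ : Γ, |c γ| ^ p ∧
      ∑' γ : Γ, |c γ| ^ p ≤ B * ∫ y, |∑' γ : Γ, c γ * F γ y| ^ p)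
    -- data on which C′ may depend
    (ε : ℝ) (hε : 0 < ε) (d : ℕ) (CΓ : ℝ) (hCΓ : 0 < CΓ) :
    -- C′ does not depend on Ω (in particular not on μ(Ω))
    ∃ C' : ℝ, 0 < C' ∧
      ∀ Ω : Set (Fin n → ℝ), IsCompact Ω → 1 ≤ (volume Ω).toReal →
        (∃ s : Finset (Fin n → ℤ), s.card = d ∧ frontier Ω ⊆
          ⋃ k ∈ s, Set.Icc (fun i => (k i : ℝ)) (fun i => (k i : ℝ) + 1)) →
        (Γ ∩ Ω).Finite → ((Γ ∩ Ω).ncard : ℝ) ≤ CΓ * (volume Ω).toReal →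
        ∃ M : Set (Fin n → ℝ), IsCompact M ∧
          -- the approximation property of the lemma
          (∀ c : Γ → ℝ, Summable (fun γ => |c γ| ^ p) →
            ∀ x ∈ Ω,
              |(∑' γ : Γ, c γ * F γ x) -
                  ∑' γ : Γ, (if (γ : Fin n → ℝ) ∈ M then c γ * F γ x else 0)| ≤
                (ε / (volume Ω).toReal) * (∫ y, |∑' γ : Γ, c γ * F γ y| ^ p) ^ (1 / p)) ∧
          -- the cardinality bound
          (Γ ∩ M).Finite ∧
          (((Γ ∩ M).ncard : ℝ) ≤ C' * (volume Ω).toReal) ∧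
          -- in particular: the dimension of V_M is at most C′ μ(Ω)
          ((Module.finrank ℝ
              (Submodule.span ℝ
                {g : (Fin n → ℝ) → ℝ | ∃ γ : Γ, (γ : Fin n → ℝ) ∈ M ∧ g = F γ}) : ℝ) ≤
            C' * (volume Ω).toReal) :=
  statement5_general n p hp Γ NΓ hNΓfin hNΓ Θ T hΘbdd hΘsum C α hα1 hα2 hdecay F hFloc A B hB hframe
    ε hε d CΓ hCΓ
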